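/- Let Y = ΦX + E with Φ ∈ ℂ^{M×N}, X ∈ ℂ^{N×L} s row-sparse, and E ∈ ℂ^{M×L}. Let X̃ ∈ ℂ^{N×L} satisfy ΦX̃ = Y, let T ⊆ {1,…,N} with |T| = t be such that Φ_T*Φ_T is invertible, and let W̄ be the feedback of X̃: W̄_(T^c) = 0 and W̄_{(T)} = X̃_{(T)} + (Φ_T*Φ_T)⁻¹Φ_T*Φ_{T^c}X̃_{(T^c)}. If δ_{s+t} is a restricted isometry constant of order s+t for Φ and δ_t is a restricted isometry constant of order t for Φ, then ‖(X − W̄)_(T)‖_F ≤ δ_{s+t}·‖X − W̄‖_F + √(1+δ_t)·‖E‖_F. -/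

import Mathlib

open Matrix BigOperators

/-- Frobenius norm of a complex matrix. -/
noncomputable def frobNorm {m n : Type*} [Fintype m] [Fintype n] (A : Matrix m n ℂ) : ℝ :=
  Real.sqrt (∑ i, ∑ j, ‖A i j‖ ^ 2)

open scoped Classical in
/-- The row support of a matrix: indices of its nonzero rows. -/
noncomputable def rowSupp {N L : ℕ} (X : Matrix (Fin N) (Fin L) ℂ) : Finset (Fin N) :=
  Finset.univ.filter (fun i => X i ≠ 0)

/-- `X_(T)`: the matrix obtained from `X` by zeroing every row with index outside `T`. -/
def rowRestrict {N L : ℕ} (T : Finset (Fin N)) (X : Matrix (Fin N) (Fin L) ℂ) :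
    Matrix (Fin N) (Fin L) ℂ :=
  fun i j => if i ∈ T then X i j else 0

/-- Euclidean norm of a complex vector. -/
noncomputable def vecNorm {ι : Type*} [Fintype ι] (v : ι → ℂ) : ℝ :=
  Real.sqrt (∑ i, ‖v i‖ ^ 2)

/-- `Φ_T`: the submatrix of columns of `Φ` indexed by `T`. -/
def colSub {M N : ℕ} (Φ : Matrix (Fin M) (Fin N) ℂ) (T : Finset (Fin N)) :
    Matrix (Fin M) {x // x ∈ T} ℂ :=
  fun i j => Φ i j.val

/-- `X_{(T)}`: the submatrix of rows of `X` indexed by `T`. -/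
def rowSub {N L : ℕ} (T : Finset (Fin N)) (X : Matrix (Fin N) (Fin L) ℂ) :
    Matrix {x // x ∈ T} (Fin L) ℂ :=
  fun i j => X i.val j

/-- The set of values `‖R v‖` over unit vectors `v` (the "singular value range"). -/
noncomputable def sigmaSet {L : ℕ} (R : Matrix (Fin L) (Fin L) ℂ) : Set ℝ :=
  {c | ∃ v : Fin L → ℂ, vecNorm v = 1 ∧ c = vecNorm (R.mulVec v)}

/-- The largest singular value of `R`. -/
noncomputable def sigmaMax {L : ℕ} (R : Matrix (Fin L) (Fin L) ℂ) : ℝ :=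
  sSup (sigmaSet R)

/-- The smallest singular value of `R` (for invertible `R`). -/
noncomputable def sigmaMin {L : ℕ} (R : Matrix (Fin L) (Fin L) ℂ) : ℝ :=
  sInf (sigmaSet R)

/-- Spectral (operator) norm of a square complex matrix. -/
noncomputable def specNorm {ι : Type*} [Fintype ι] (A : Matrix ι ι ℂ) : ℝ :=
  sSup {c | ∃ v : ι → ℂ, vecNorm v = 1 ∧ c = vecNorm (A.mulVec v)}

/-- `δ` is a restricted isometry constant (RIC) of order `t` for `A`, relative to matrices with
`L` columns: `(1-δ)‖Z‖_F² ≤ ‖AZ‖_F² ≤ (1+δ)‖Z‖_F²` for every `t` row-sparse `Z`. -/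
def IsRIC {M N : ℕ} (L : ℕ) (A : Matrix (Fin M) (Fin N) ℂ) (t : ℕ) (δ : ℝ) : Prop :=
  ∀ Z : Matrix (Fin N) (Fin L) ℂ, (rowSupp Z).card ≤ t →
    (1 - δ) * frobNorm Z ^ 2 ≤ frobNorm (A * Z) ^ 2 ∧
      frobNorm (A * Z) ^ 2 ≤ (1 + δ) * frobNorm Z ^ 2

/-- `γ` is a preconditioned restricted isometry constant (P-RIC) of order `t` for `Φ`:
`(1-γ)‖Z‖_F² ≤ Re tr((ΦZ)* (ΦΦ*)⁻¹ (ΦZ))` for every `t` row-sparse `Z`. -/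
def IsPRIC {M N : ℕ} (L : ℕ) (Φ : Matrix (Fin M) (Fin N) ℂ) (t : ℕ) (γ : ℝ) : Prop :=
  ∀ Z : Matrix (Fin N) (Fin L) ℂ, (rowSupp Z).card ≤ t →
    (1 - γ) * frobNorm Z ^ 2 ≤ (Matrix.trace ((Φ * Z)ᴴ * ((Φ * Φᴴ)⁻¹ * (Φ * Z)))).re

/-- `θ` is an upper restricted isometry constant of order `t` for `A`:
`‖AZ‖_F² ≤ (1+θ)‖Z‖_F²` for every `t` row-sparse `Z`. -/
def IsUpperRIC {M N : ℕ} (L : ℕ) (A : Matrix (Fin M) (Fin N) ℂ) (t : ℕ) (θ : ℝ) : Prop :=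
  ∀ Z : Matrix (Fin N) (Fin L) ℂ, (rowSupp Z).card ≤ t →
    frobNorm (A * Z) ^ 2 ≤ (1 + θ) * frobNorm Z ^ 2

/-- The least-squares feedback of `X` on the index set `T`:
rows outside `T` are zero and on `T` it equals
`X_{(T)} + (Φ_T* Φ_T)⁻¹ Φ_T* Φ_{T^c} X_{(T^c)}`. -/
noncomputable def feedback {M N L : ℕ} (Φ : Matrix (Fin M) (Fin N) ℂ) (T : Finset (Fin N))
    (X : Matrix (Fin N) (Fin L) ℂ) : Matrix (Fin N) (Fin L) ℂ :=
  fun i j =>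
    if h : i ∈ T then
      (rowSub T X +
        ((colSub Φ T)ᴴ * colSub Φ T)⁻¹ * (colSub Φ T)ᴴ *
          (colSub Φ Tᶜ * rowSub Tᶜ X)) ⟨i, h⟩ j
    else 0

/-! With `V = X - W̄`, the feedback is the least-squares correction on `T`, so the residual
`ΦX̃ - ΦW̄ = ΦV + E` is orthogonal to the range of `Φ_T`; hence `⟪ΦV_(T), ΦV⟫ = -⟪ΦV_(T), E⟫`.
As `V_(T)` and `V` are jointly `(s+t)`-row-sparse, polarizing the RIP gives
`‖V_(T)‖² = re ⟪V_(T), V⟫ ≤ re ⟪ΦV_(T), ΦV⟫ + δ_{s+t} ‖V_(T)‖ ‖V‖`, and Cauchy–Schwarz with the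
upper RIP bound of order `t` gives `-re ⟪ΦV_(T), E⟫ ≤ √(1+δ_t) ‖V_(T)‖ ‖E‖`.
Dividing by `‖V_(T)‖` gives the claim. -/

open scoped InnerProductSpace

section Frobenius
variable {m n : Type*}

def frobVec : Matrix m n ℂ ≃ₗ[ℂ] EuclideanSpace ℂ (m × n) :=
  (LinearEquiv.curry ℂ ℂ m n).symm.trans (WithLp.linearEquiv 2 ℂ (m × n → ℂ)).symm

@[simp]
lemma frobVec_apply (A : Matrix m n ℂ) (p : m × n) : frobVec A p = A p.1 p.2 := rfl

variable [Fintype m] [Fintype n]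

lemma frobNorm_nonneg (A : Matrix m n ℂ) : 0 ≤ frobNorm A := Real.sqrt_nonneg _

lemma frobNorm_eq_norm_frobVec (A : Matrix m n ℂ) : frobNorm A = ‖frobVec A‖ := by
  rw [frobNorm, EuclideanSpace.norm_eq, Fintype.sum_prod_type]
  rfl

lemma inner_frobVec (A B : Matrix m n ℂ) : ⟪frobVec A, frobVec B⟫_ℂ = (Aᴴ * B).trace := by
  simp only [PiLp.inner_apply, Fintype.sum_prod_type, frobVec_apply, RCLike.inner_apply,
    Matrix.trace, Matrix.diag, Matrix.mul_apply, Matrix.conjTranspose_apply]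
  rw [Finset.sum_comm]
  simp [mul_comm]

lemma inner_frobVec_mul_left {k : Type*} [Fintype k] (A : Matrix k m ℂ) (B : Matrix m n ℂ)
    (C : Matrix k n ℂ) : ⟪frobVec (A * B), frobVec C⟫_ℂ = ⟪frobVec B, frobVec (Aᴴ * C)⟫_ℂ := by
  rw [inner_frobVec, inner_frobVec, Matrix.conjTranspose_mul, Matrix.mul_assoc]

end Frobenius

lemma re_inner_sub_re_inner_le {𝕜 E F : Type*} [RCLike 𝕜] [NormedAddCommGroup E]
    [InnerProductSpace 𝕜 E] [NormedAddCommGroup F] [InnerProductSpace 𝕜 F] {δ : ℝ}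
    {x y : E} {u v : F} (hlow : (1 - δ) * ‖x + y‖ ^ 2 ≤ ‖u + v‖ ^ 2)
    (hup : ‖u - v‖ ^ 2 ≤ (1 + δ) * ‖x - y‖ ^ 2) :
    RCLike.re ⟪x, y⟫_𝕜 - RCLike.re ⟪u, v⟫_𝕜 ≤ δ * (‖x‖ ^ 2 + ‖y‖ ^ 2) / 2 := by
  rw [norm_add_sq (𝕜 := 𝕜), norm_add_sq (𝕜 := 𝕜)] at hlow
  rw [norm_sub_sq (𝕜 := 𝕜), norm_sub_sq (𝕜 := 𝕜)] at hup
  linarith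

section RowSupport
variable {M N L : ℕ}

lemma rowSupp_subset_iff {S : Finset (Fin N)} {Z : Matrix (Fin N) (Fin L) ℂ} :
    rowSupp Z ⊆ S ↔ ∀ i ∉ S, ∀ j, Z i j = 0 := by
  simp only [rowSupp, Finset.subset_iff, Finset.mem_filter, Finset.mem_univ, true_and]
  refine ⟨fun h i hi j => ?_, fun h i hz => by_contra fun hi => hz (funext (h i hi))⟩
  exact congrFun (not_not.1 (mt (@h i) hi)) j

lemma rowSupp_rowRestrict_subset (T : Finset (Fin N)) (Z : Matrix (Fin N) (Fin L) ℂ) :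
    rowSupp (rowRestrict T Z) ⊆ T :=
  rowSupp_subset_iff.2 fun _ hi _ => if_neg hi

lemma rowSupp_sub_feedback_subset (Φ : Matrix (Fin M) (Fin N) ℂ) (T : Finset (Fin N))
    (X Xt : Matrix (Fin N) (Fin L) ℂ) :
    rowSupp (X - feedback Φ T Xt) ⊆ rowSupp X ∪ T := by
  refine rowSupp_subset_iff.2 fun i hi j => ?_
  rw [Finset.mem_union, not_or] at hi
  simp [feedback, hi.2, rowSupp_subset_iff.1 subset_rfl i hi.1 j]

end RowSupport

namespace IsRIC
variable {M N L k : ℕ} {Φ : Matrix (Fin M) (Fin N) ℂ} {δ : ℝ}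

lemma frobNorm_mul_le (hΦ : IsRIC L Φ k δ) {Z : Matrix (Fin N) (Fin L) ℂ}
    (hZ : (rowSupp Z).card ≤ k) : frobNorm (Φ * Z) ≤ √(1 + δ) * frobNorm Z := by
  rw [← Real.sqrt_sq (frobNorm_nonneg Z), ← Real.sqrt_mul' _ (sq_nonneg _)]
  exact Real.le_sqrt_of_sq_le (hΦ Z hZ).2

lemma re_inner_sub_le (hΦ : IsRIC L Φ k δ) {S : Finset (Fin N)} (hS : S.card ≤ k)
    {Z₁ Z₂ : Matrix (Fin N) (Fin L) ℂ} (h₁ : rowSupp Z₁ ⊆ S) (h₂ : rowSupp Z₂ ⊆ S) :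
    (⟪frobVec Z₁, frobVec Z₂⟫_ℂ).re - (⟪frobVec (Φ * Z₁), frobVec (Φ * Z₂)⟫_ℂ).re ≤
      δ * frobNorm Z₁ * frobNorm Z₂ := by
  have hsparse (c d : ℂ) : (rowSupp (c • Z₁ + d • Z₂)).card ≤ k := by
    refine (Finset.card_le_card (rowSupp_subset_iff.2 fun i hi j => ?_)).trans hS
    simp [rowSupp_subset_iff.1 h₁ i hi j, rowSupp_subset_iff.1 h₂ i hi j]
  rw [frobNorm_eq_norm_frobVec, frobNorm_eq_norm_frobVec]
  rcases (mul_nonneg (norm_nonneg (frobVec Z₁)) (norm_nonneg (frobVec Z₂))).eq_or_lt with hab | hab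
  · rcases mul_eq_zero.1 hab.symm with h | h <;>
      simp [frobVec.map_eq_zero_iff.1 (norm_eq_zero.1 h)]
  set a := ‖frobVec Z₁‖
  set b := ‖frobVec Z₂‖
  -- polarize at `b • Z₁` and `a • Z₂`, which have the same norm `a * b`
  have key := re_inner_sub_re_inner_le (𝕜 := ℂ) (δ := δ) (x := frobVec ((b : ℂ) • Z₁))
    (y := frobVec ((a : ℂ) • Z₂)) (u := frobVec (Φ * ((b : ℂ) • Z₁)))
    (v := frobVec (Φ * ((a : ℂ) • Z₂))) ?_ ?_
  · simp only [map_smul, Matrix.mul_smul, inner_smul_left, inner_smul_right, Complex.conj_ofReal,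
      RCLike.re_to_complex, Complex.re_ofReal_mul, norm_smul, Complex.norm_real, Real.norm_eq_abs,
      mul_pow, sq_abs] at key
    refine le_of_mul_le_mul_left ?_ hab
    linear_combination key
  · rw [← map_add, ← map_add, ← Matrix.mul_add]
    simpa only [frobNorm_eq_norm_frobVec] using (hΦ _ (hsparse _ _)).1
  · rw [← map_sub, ← map_sub, ← Matrix.mul_sub, sub_eq_add_neg, ← neg_smul]
    simpa only [frobNorm_eq_norm_frobVec] using (hΦ _ (hsparse _ _)).2

end IsRIC

section LeastSquares
variable {M N L : ℕ} (Φ : Matrix (Fin M) (Fin N) ℂ) (T : Finset (Fin N))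

lemma mul_eq_colSub_mul_rowSub_add (Z : Matrix (Fin N) (Fin L) ℂ) :
    Φ * Z = colSub Φ T * rowSub T Z + colSub Φ Tᶜ * rowSub Tᶜ Z := by
  ext i j
  simp only [Matrix.add_apply, Matrix.mul_apply, colSub, rowSub]
  rw [Finset.sum_coe_sort T (fun k => Φ i k * Z k j),
    Finset.sum_coe_sort Tᶜ (fun k => Φ i k * Z k j), Finset.sum_add_sum_compl]

variable {Φ T}

lemma mul_eq_colSub_mul_rowSub {Z : Matrix (Fin N) (Fin L) ℂ} (hZ : rowSupp Z ⊆ T) :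
    Φ * Z = colSub Φ T * rowSub T Z := by
  have hZc : rowSub Tᶜ Z = 0 := by
    ext i j
    exact rowSupp_subset_iff.1 hZ i (Finset.mem_compl.1 i.2) j
  rw [mul_eq_colSub_mul_rowSub_add Φ T Z, hZc, Matrix.mul_zero, add_zero]

lemma rowSupp_feedback_subset (X : Matrix (Fin N) (Fin L) ℂ) : rowSupp (feedback Φ T X) ⊆ T :=
  rowSupp_subset_iff.2 fun _ hi _ => dif_neg hi

lemma conjTranspose_colSub_mul_feedback (hinv : IsUnit ((colSub Φ T)ᴴ * colSub Φ T))
    (X : Matrix (Fin N) (Fin L) ℂ) :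
    (colSub Φ T)ᴴ * (Φ * feedback Φ T X) = (colSub Φ T)ᴴ * (Φ * X) := by
  have hrow : rowSub T (feedback Φ T X) = rowSub T X +
      ((colSub Φ T)ᴴ * colSub Φ T)⁻¹ * (colSub Φ T)ᴴ * (colSub Φ Tᶜ * rowSub Tᶜ X) := by
    ext i j
    simp [rowSub, feedback, i.2]
  rw [mul_eq_colSub_mul_rowSub (rowSupp_feedback_subset X), hrow,
    mul_eq_colSub_mul_rowSub_add Φ T X]
  simp only [Matrix.mul_add, Matrix.mul_assoc]
  congr 1
  rw [← Matrix.mul_assoc, ← Matrix.mul_assoc,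
    Matrix.mul_nonsing_inv _ ((Matrix.isUnit_iff_isUnit_det _).1 hinv), Matrix.one_mul]

lemma inner_mul_sub_mul_feedback_eq_zero (hinv : IsUnit ((colSub Φ T)ᴴ * colSub Φ T))
    {Z : Matrix (Fin N) (Fin L) ℂ} (hZ : rowSupp Z ⊆ T) (X : Matrix (Fin N) (Fin L) ℂ) :
    ⟪frobVec (Φ * Z), frobVec (Φ * X - Φ * feedback Φ T X)⟫_ℂ = 0 := by
  rw [mul_eq_colSub_mul_rowSub hZ, inner_frobVec_mul_left, Matrix.mul_sub,
    conjTranspose_colSub_mul_feedback hinv, sub_self, map_zero, inner_zero_right]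

end LeastSquares

lemma re_inner_frobVec_rowRestrict {N L : ℕ} (T : Finset (Fin N))
    (Z : Matrix (Fin N) (Fin L) ℂ) :
    (⟪frobVec (rowRestrict T Z), frobVec Z⟫_ℂ).re = frobNorm (rowRestrict T Z) ^ 2 := by
  have h : ⟪frobVec (rowRestrict T Z), frobVec Z⟫_ℂ =
      ⟪frobVec (rowRestrict T Z), frobVec (rowRestrict T Z)⟫_ℂ := by
    simp only [PiLp.inner_apply, frobVec_apply]
    refine Finset.sum_congr rfl fun p _ => ?_
    by_cases hp : p.1 ∈ T <;> simp [rowRestrict, hp]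
  rw [h, frobNorm_eq_norm_frobVec, ← RCLike.re_to_complex]
  exact inner_self_eq_norm_sq _

theorem stmt9_general {M N L s t : ℕ} (Φ : Matrix (Fin M) (Fin N) ℂ)
    (X : Matrix (Fin N) (Fin L) ℂ) (E : Matrix (Fin M) (Fin L) ℂ)
    (hXs : (rowSupp X).card ≤ s)
    (Y : Matrix (Fin M) (Fin L) ℂ) (hY : Y = Φ * X + E)
    (Xt : Matrix (Fin N) (Fin L) ℂ) (hfeas : Φ * Xt = Y)
    (T : Finset (Fin N)) (hTcard : T.card = t)
    (hinv : IsUnit ((colSub Φ T)ᴴ * colSub Φ T))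
    (δst δt : ℝ) (hδst0 : 0 ≤ δst)
    (hRICst : IsRIC L Φ (s + t) δst) (hRICt : IsRIC L Φ t δt) :
    frobNorm (rowRestrict T (X - feedback Φ T Xt)) ≤
      δst * frobNorm (X - feedback Φ T Xt) + Real.sqrt (1 + δt) * frobNorm E := by
  set V := X - feedback Φ T Xt
  set VT := rowRestrict T V
  have hVT : rowSupp VT ⊆ T := rowSupp_rowRestrict_subset T V
  have hS : (rowSupp X ∪ T).card ≤ s + t := (Finset.card_union_le _ _).trans (by omega)
  have hpol := hRICst.re_inner_sub_le hS (hVT.trans Finset.subset_union_right)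
    (rowSupp_sub_feedback_subset Φ T X Xt)
  have horth : (⟪frobVec (Φ * VT), frobVec (Φ * V)⟫_ℂ).re =
      -(⟪frobVec (Φ * VT), frobVec E⟫_ℂ).re := by
    have h := inner_mul_sub_mul_feedback_eq_zero hinv hVT Xt
    rw [hfeas, hY, add_sub_right_comm, ← Matrix.mul_sub, map_add, inner_add_right] at h
    rw [eq_neg_iff_add_eq_zero, ← Complex.add_re, h, Complex.zero_re]
  have hE : -(⟪frobVec (Φ * VT), frobVec E⟫_ℂ).re ≤ √(1 + δt) * frobNorm VT * frobNorm E := by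
    calc -(⟪frobVec (Φ * VT), frobVec E⟫_ℂ).re
        ≤ frobNorm (Φ * VT) * frobNorm E := by
          simpa [frobNorm_eq_norm_frobVec] using
            re_inner_le_norm (𝕜 := ℂ) (frobVec (Φ * VT)) (frobVec (-E))
      _ ≤ √(1 + δt) * frobNorm VT * frobNorm E :=
          mul_le_mul_of_nonneg_right (hRICt.frobNorm_mul_le (hTcard ▸ Finset.card_le_card hVT))
            (frobNorm_nonneg E)
  rw [re_inner_frobVec_rowRestrict, horth] at hpol
  have hR : 0 ≤ δst * frobNorm V + √(1 + δt) * frobNorm E :=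
    add_nonneg (mul_nonneg hδst0 (frobNorm_nonneg V))
      (mul_nonneg (Real.sqrt_nonneg _) (frobNorm_nonneg E))
  nlinarith [frobNorm_nonneg VT]

/-- on-support error bound for the feedback (step of Lemma 8). -/
theorem stmt9 {M N L s t : ℕ} (Φ : Matrix (Fin M) (Fin N) ℂ)
    (X : Matrix (Fin N) (Fin L) ℂ) (E : Matrix (Fin M) (Fin L) ℂ)
    (hXs : (rowSupp X).card ≤ s)
    (Y : Matrix (Fin M) (Fin L) ℂ) (hY : Y = Φ * X + E)
    (Xt : Matrix (Fin N) (Fin L) ℂ) (hfeas : Φ * Xt = Y)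
    (T : Finset (Fin N)) (hTcard : T.card = t)
    (hinv : IsUnit ((colSub Φ T)ᴴ * colSub Φ T))
    (δst δt : ℝ) (hδst0 : 0 ≤ δst) (hδt0 : 0 ≤ δt)
    (hRICst : IsRIC L Φ (s + t) δst) (hRICt : IsRIC L Φ t δt) :
    frobNorm (rowRestrict T (X - feedback Φ T Xt)) ≤
      δst * frobNorm (X - feedback Φ T Xt) + Real.sqrt (1 + δt) * frobNorm E :=
  stmt9_general Φ X E hXs Y hY Xt hfeas T hTcard hinv δst δt hδst0 hRICst hRICt
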